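/- arXiv:2106.10894 — 5 statements merged into one kernel-verified Lean document; each statement's English description precedes it below -/
import Mathlib

section
/- Let (X,𝒜,μ) be a bounded charge space. Let {f_k} be a sequence of real-valued functions on X and let f and g be real-valued functions on X such that f_k converges to f hazily and f_k ≤ g almost everywhere for every k ∈ ℕ. Then f ≤ g almost everywhere. -/
open Filter Set Topology

section ChargeDefs

variable {X : Type*}

/-- A field of sets on `X`: contains `∅`, closed under complements and finite unions. -/
structure IsSetField (𝒜 : Set (Set X)) : Prop where
  empty_mem : (∅ : Set X) ∈ 𝒜
  compl_mem : ∀ A ∈ 𝒜, Aᶜ ∈ 𝒜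
  union_mem : ∀ A ∈ 𝒜, ∀ B ∈ 𝒜, A ∪ B ∈ 𝒜

/-- A (bounded, non-negative) charge space: a field of sets together with a finitely
additive non-negative real-valued set function vanishing on `∅`.  (The function `μ` is
given on all of `𝒫(X)`; only its values on `𝒜` are constrained or used.) -/
structure IsCharge (𝒜 : Set (Set X)) (μ : Set X → ℝ) : Prop where
  isSetField : IsSetField 𝒜
  empty : μ ∅ = 0
  nonneg : ∀ A ∈ 𝒜, 0 ≤ μ A
  additive : ∀ A ∈ 𝒜, ∀ B ∈ 𝒜, Disjoint A B → μ (A ∪ B) = μ A + μ B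

/-- The outer charge `μ*(A) = inf {μ B : B ∈ 𝒜, A ⊆ B}`. -/
noncomputable def outerCharge (𝒜 : Set (Set X)) (μ : Set X → ℝ) (A : Set X) : ℝ :=
  sInf (μ '' {B | B ∈ 𝒜 ∧ A ⊆ B})

/-- A null function: `μ*({x : |h x| > ε}) = 0` for every `ε > 0`. -/
def IsNullFn (𝒜 : Set (Set X)) (μ : Set X → ℝ) (h : X → ℝ) : Prop :=
  ∀ ε > (0 : ℝ), outerCharge 𝒜 μ {x | ε < |h x|} = 0

/-- `f = g` almost everywhere: `f - g` is a null function. -/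
def EqAE (𝒜 : Set (Set X)) (μ : Set X → ℝ) (f g : X → ℝ) : Prop :=
  IsNullFn 𝒜 μ (fun x => f x - g x)

/-- `f ≤ g` almost everywhere: `f ≤ g + h` for some null function `h`. -/
def LeAE (𝒜 : Set (Set X)) (μ : Set X → ℝ) (f g : X → ℝ) : Prop :=
  ∃ h : X → ℝ, IsNullFn 𝒜 μ h ∧ ∀ x, f x ≤ g x + h x

/-- Hazy convergence of a sequence of functions. -/
def HazyConv (𝒜 : Set (Set X)) (μ : Set X → ℝ) (fn : ℕ → X → ℝ) (f : X → ℝ) : Prop :=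
  ∀ ε > (0 : ℝ), Tendsto (fun n => outerCharge 𝒜 μ {x | ε < |fn n x - f x|}) atTop (𝓝 0)

/-- A simple function w.r.t. the field `𝒜`: `Σ c_k 1_{A_k}` for a finite partition
`{A_k} ⊆ 𝒜` of `X`. -/
def IsSimpleFn (𝒜 : Set (Set X)) (f : X → ℝ) : Prop :=
  ∃ (n : ℕ) (c : Fin n → ℝ) (A : Fin n → Set X),
    (∀ k, A k ∈ 𝒜) ∧ (Pairwise fun i j => Disjoint (A i) (A j)) ∧
    (⋃ k, A k) = Set.univ ∧ ∀ x, f x = ∑ k, (A k).indicator (fun _ => c k) x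

/-- `T₁`-measurability: `f` is the hazy limit of a sequence of simple functions.
`MemL0 𝒜 μ f` says `f ∈ L₀(X,𝒜,μ)`. -/
def MemL0 (𝒜 : Set (Set X)) (μ : Set X → ℝ) (f : X → ℝ) : Prop :=
  ∃ fn : ℕ → X → ℝ, (∀ n, IsSimpleFn 𝒜 (fn n)) ∧ HazyConv 𝒜 μ fn f

/-- Integral of a simple function: `Σ_y y·μ(f⁻¹{y})` (a finite sum for simple `f`;
for a simple function `Σ c_k 1_{A_k}` over a partition this equals `Σ c_k μ(A_k)`). -/
noncomputable def sIntegral (μ : Set X → ℝ) (f : X → ℝ) : ℝ :=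
  ∑ᶠ y, y * μ (f ⁻¹' {y})

/-- A determining sequence for `f`: simple functions converging hazily to `f` with
`∫ |f_n - f_m| dμ → 0` as `m, n → ∞`. -/
def IsDetermining (𝒜 : Set (Set X)) (μ : Set X → ℝ) (fn : ℕ → X → ℝ) (f : X → ℝ) : Prop :=
  (∀ n, IsSimpleFn 𝒜 (fn n)) ∧ HazyConv 𝒜 μ fn f ∧
    Tendsto (fun mn : ℕ × ℕ => sIntegral μ (fun x => |fn mn.1 x - fn mn.2 x|)) atTop (𝓝 0)

/-- Integrability w.r.t. a charge: existence of a determining sequence.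
`MemL1 𝒜 μ f` says `f ∈ L₁(X,𝒜,μ)`. -/
def MemL1 (𝒜 : Set (Set X)) (μ : Set X → ℝ) (f : X → ℝ) : Prop :=
  ∃ fn : ℕ → X → ℝ, IsDetermining 𝒜 μ fn f

-- The integral `∫ f dμ` of an integrable function: the limit of the integrals of
-- any determining sequence (this limit is independent of the choice).
open Classical in
noncomputable def chargeIntegral (𝒜 : Set (Set X)) (μ : Set X → ℝ) (f : X → ℝ) : ℝ :=
  if h : ∃ fn : ℕ → X → ℝ, IsDetermining 𝒜 μ fn f then
    limUnder atTop (fun n => sIntegral μ (h.choose n))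
  else 0

/-- Smoothness: for every `ε > 0` there is `k > 0` with `μ*({x : |f x| > k}) < ε`. -/
def SmoothFn (𝒜 : Set (Set X)) (μ : Set X → ℝ) (f : X → ℝ) : Prop :=
  ∀ ε > (0 : ℝ), ∃ k > (0 : ℝ), outerCharge 𝒜 μ {x | k < |f x|} < ε

/-- The field of the Peano-Jordan completion of `(X,𝒜,μ)`. -/
def pjField (𝒜 : Set (Set X)) (μ : Set X → ℝ) : Set (Set X) :=
  {A | ∀ ε > (0 : ℝ), ∃ B ∈ 𝒜, ∃ C ∈ 𝒜, B ⊆ A ∧ A ⊆ C ∧ μ (C \ B) < ε}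

/-- The charge of the Peano-Jordan completion: `μ̄(A) = sup {μ B : B ∈ 𝒜, B ⊆ A}`. -/
noncomputable def pjCharge (𝒜 : Set (Set X)) (μ : Set X → ℝ) (A : Set X) : ℝ :=
  sSup (μ '' {B | B ∈ 𝒜 ∧ B ⊆ A})

/-- The pseudometric `d` on `L₀`. -/
noncomputable def hazyDist (𝒜 : Set (Set X)) (μ : Set X → ℝ) (f g : X → ℝ) : ℝ :=
  sInf {ε : ℝ | 0 < ε ∧ outerCharge 𝒜 μ {x | ε < |f x - g x|} < ε}

/-- `f ∈ L_p(X,𝒜,μ)` for `p ∈ [1,∞)`: `f` is `T₁`-measurable and `|f|^p` integrable. -/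
def MemLpC (𝒜 : Set (Set X)) (μ : Set X → ℝ) (p : ℝ) (f : X → ℝ) : Prop :=
  MemL0 𝒜 μ f ∧ MemL1 𝒜 μ (fun x => |f x| ^ p)

/-- `f ∈ L_p` for `p ∈ {0} ∪ [1,∞)`. -/
def MemLp' (𝒜 : Set (Set X)) (μ : Set X → ℝ) (p : ℝ) (f : X → ℝ) : Prop :=
  if p = 0 then MemL0 𝒜 μ f else MemLpC 𝒜 μ p f

/-- The distance on `L_p`: the pseudometric `d` for `p = 0`, and
`‖f - g‖_p = (∫ |f-g|^p dμ)^(1/p)` for `p ≥ 1`. -/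
noncomputable def LpDist (𝒜 : Set (Set X)) (μ : Set X → ℝ) (p : ℝ) (f g : X → ℝ) : ℝ :=
  if p = 0 then hazyDist 𝒜 μ f g
  else (chargeIntegral 𝒜 μ fun x => |f x - g x| ^ p) ^ (1 / p)

/-- The collection of null sets of a charge space. -/
def nullSets (𝒜 : Set (Set X)) (μ : Set X → ℝ) : Set (Set X) :=
  {A | outerCharge 𝒜 μ A = 0}

/-- The smallest field of sets on `X` containing a given collection `𝒞`. -/
def genSetField (𝒞 : Set (Set X)) : Set (Set X) :=
  ⋂₀ {𝒟 | IsSetField 𝒟 ∧ 𝒞 ⊆ 𝒟}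

end ChargeDefs

section Aux

variable {X : Type*} {𝒜 : Set (Set X)} {μ : Set X → ℝ}

lemma IsSetField.univ_mem (h : IsSetField 𝒜) : (univ : Set X) ∈ 𝒜 := by
  simpa using h.compl_mem ∅ h.empty_mem

lemma IsSetField.inter_mem (h : IsSetField 𝒜) {A B : Set X} (hA : A ∈ 𝒜) (hB : B ∈ 𝒜) :
    A ∩ B ∈ 𝒜 := by
  have := h.compl_mem _ (h.union_mem _ (h.compl_mem A hA) _ (h.compl_mem B hB))
  simpa [Set.compl_union] using this

lemma IsSetField.diff_mem (h : IsSetField 𝒜) {A B : Set X} (hA : A ∈ 𝒜) (hB : B ∈ 𝒜) :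
    A \ B ∈ 𝒜 := by
  simpa [Set.diff_eq] using h.inter_mem hA (h.compl_mem B hB)

lemma IsCharge.mono (hμ : IsCharge 𝒜 μ) {A B : Set X} (hA : A ∈ 𝒜) (hB : B ∈ 𝒜)
    (hAB : A ⊆ B) : μ A ≤ μ B := by
  have hd : B \ A ∈ 𝒜 := hμ.isSetField.diff_mem hB hA
  have : μ (A ∪ B \ A) = μ A + μ (B \ A) :=
    hμ.additive A hA _ hd disjoint_sdiff_right
  rw [Set.union_diff_cancel hAB] at this
  have := hμ.nonneg _ hd
  linarith

lemma IsCharge.subadd (hμ : IsCharge 𝒜 μ) {A B : Set X} (hA : A ∈ 𝒜) (hB : B ∈ 𝒜) :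
    μ (A ∪ B) ≤ μ A + μ B := by
  have hd : B \ A ∈ 𝒜 := hμ.isSetField.diff_mem hB hA
  have h1 : μ (A ∪ B \ A) = μ A + μ (B \ A) :=
    hμ.additive A hA _ hd disjoint_sdiff_right
  rw [Set.union_diff_self] at h1
  have := hμ.mono hd hB diff_subset
  linarith

lemma outerCharge_set_nonempty (hμ : IsCharge 𝒜 μ) (A : Set X) :
    (μ '' {B | B ∈ 𝒜 ∧ A ⊆ B}).Nonempty :=
  ⟨μ univ, mem_image_of_mem μ ⟨hμ.isSetField.univ_mem, subset_univ A⟩⟩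

lemma outerCharge_bddBelow (hμ : IsCharge 𝒜 μ) (A : Set X) :
    BddBelow (μ '' {B | B ∈ 𝒜 ∧ A ⊆ B}) := by
  refine ⟨0, fun y hy => ?_⟩
  obtain ⟨B, hB, rfl⟩ := hy
  exact hμ.nonneg B hB.1

lemma outerCharge_nonneg (hμ : IsCharge 𝒜 μ) (A : Set X) :
    0 ≤ outerCharge 𝒜 μ A :=
  le_csInf (outerCharge_set_nonempty hμ A) (fun y hy => by
    obtain ⟨B, hB, rfl⟩ := hy; exact hμ.nonneg B hB.1)

lemma outerCharge_mono (hμ : IsCharge 𝒜 μ) {A B : Set X} (hAB : A ⊆ B) :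
    outerCharge 𝒜 μ A ≤ outerCharge 𝒜 μ B := by
  refine csInf_le_csInf (outerCharge_bddBelow hμ A) (outerCharge_set_nonempty hμ B) ?_
  rintro y ⟨C, ⟨hC, hBC⟩, rfl⟩
  exact mem_image_of_mem μ ⟨hC, hAB.trans hBC⟩

lemma outerCharge_subadd (hμ : IsCharge 𝒜 μ) (A B : Set X) :
    outerCharge 𝒜 μ (A ∪ B) ≤ outerCharge 𝒜 μ A + outerCharge 𝒜 μ B := by
  refine le_of_forall_pos_le_add fun ε hε => ?_
  have hA : sInf (μ '' {C | C ∈ 𝒜 ∧ A ⊆ C}) < outerCharge 𝒜 μ A + ε / 2 := by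
    have := outerCharge_nonneg hμ A
    unfold outerCharge; linarith [outerCharge_nonneg hμ A]
  obtain ⟨a, ha, haε⟩ := exists_lt_of_csInf_lt (outerCharge_set_nonempty hμ A) hA
  have hB : sInf (μ '' {C | C ∈ 𝒜 ∧ B ⊆ C}) < outerCharge 𝒜 μ B + ε / 2 := by
    unfold outerCharge; linarith [outerCharge_nonneg hμ B]
  obtain ⟨b, hb, hbε⟩ := exists_lt_of_csInf_lt (outerCharge_set_nonempty hμ B) hB
  obtain ⟨CA, ⟨hCA, hACA⟩, rfl⟩ := ha
  obtain ⟨CB, ⟨hCB, hBCB⟩, rfl⟩ := hb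
  have hmem : μ (CA ∪ CB) ∈ μ '' {C | C ∈ 𝒜 ∧ A ∪ B ⊆ C} :=
    mem_image_of_mem μ ⟨hμ.isSetField.union_mem _ hCA _ hCB, union_subset_union hACA hBCB⟩
  have h1 : outerCharge 𝒜 μ (A ∪ B) ≤ μ (CA ∪ CB) :=
    csInf_le (outerCharge_bddBelow hμ _) hmem
  have h2 := hμ.subadd hCA hCB
  linarith

end Aux

/-- If `f_k → f` hazily and `f_k ≤ g` a.e. for every `k`, then `f ≤ g` a.e. -/
theorem limit_dominated {X : Type*} (𝒜 : Set (Set X)) (μ : Set X → ℝ)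
    (hμ : IsCharge 𝒜 μ) (fk : ℕ → X → ℝ) (f g : X → ℝ)
    (hconv : HazyConv 𝒜 μ fk f) (hle : ∀ k : ℕ, LeAE 𝒜 μ (fk k) g) :
    LeAE 𝒜 μ f g := by
  refine ⟨fun x => max (f x - g x) 0, ?_, fun x => by
    have := le_max_left (f x - g x) 0; linarith⟩
  intro ε hε
  have key : ∀ δ > (0 : ℝ), outerCharge 𝒜 μ {x | ε < |max (f x - g x) 0|} ≤ δ := by
    intro δ hδ
    obtain ⟨k, hk⟩ := ((hconv (ε / 2) (by positivity)).eventually (gt_mem_nhds hδ)).exists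
    obtain ⟨h, hnull, hlek⟩ := hle k
    have hsub : {x | ε < |max (f x - g x) 0|} ⊆
        {x | ε / 2 < |fk k x - f x|} ∪ {x | ε / 2 < |h x|} := by
      intro x hx
      simp only [mem_setOf_eq, abs_of_nonneg (le_max_right (f x - g x) 0)] at hx
      have hfg : ε < f x - g x := by
        rcases max_cases (f x - g x) 0 with ⟨h1, _⟩ | ⟨h1, _⟩ <;> [skip; linarith] <;>
          rwa [h1] at hx
      by_contra hc
      simp only [mem_union, mem_setOf_eq, not_or, not_lt] at hc
      obtain ⟨h1, h2⟩ := hc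
      have ha1 := abs_le.mp h1
      have ha2 := abs_le.mp h2
      have := hlek x
      linarith [ha1.1, ha2.2]
    have hB : outerCharge 𝒜 μ {x | ε / 2 < |h x|} = 0 := hnull (ε / 2) (by positivity)
    calc outerCharge 𝒜 μ {x | ε < |max (f x - g x) 0|}
        ≤ outerCharge 𝒜 μ ({x | ε / 2 < |fk k x - f x|} ∪ {x | ε / 2 < |h x|}) :=
          outerCharge_mono hμ hsub
      _ ≤ outerCharge 𝒜 μ {x | ε / 2 < |fk k x - f x|}
          + outerCharge 𝒜 μ {x | ε / 2 < |h x|} := outerCharge_subadd hμ _ _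
      _ ≤ δ := by rw [hB]; linarith
  have h0 : outerCharge 𝒜 μ {x | ε < |max (f x - g x) 0|} ≤ 0 :=
    le_of_forall_pos_le_add fun δ hδ => by simpa using key δ hδ
  exact le_antisymm h0 (outerCharge_nonneg hμ _)
end

section
/- Let (X,𝒜,μ) be a bounded charge space and f ∈ L0(X,𝒜,μ). Then there are at most countably many y ∈ ℝ such that lim_{δ→0} μ*(f⁻¹[y−δ, y+δ]) > 0. -/
open Filter Set Topology

namespace CA

variable {X : Type*} {𝒜 : Set (Set X)} {μ : Set X → ℝ}

lemma univ_mem (h : IsSetField 𝒜) : (univ : Set X) ∈ 𝒜 := by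
  have := h.compl_mem ∅ h.empty_mem; simpa using this

lemma inter_mem (h : IsSetField 𝒜) {A B : Set X} (hA : A ∈ 𝒜) (hB : B ∈ 𝒜) :
    A ∩ B ∈ 𝒜 := by
  have := h.compl_mem _ (h.union_mem _ (h.compl_mem _ hA) _ (h.compl_mem _ hB))
  simpa [compl_union] using this

lemma diff_mem (h : IsSetField 𝒜) {A B : Set X} (hA : A ∈ 𝒜) (hB : B ∈ 𝒜) :
    A \ B ∈ 𝒜 := inter_mem h hA (h.compl_mem _ hB)

lemma mono (hμ : IsCharge 𝒜 μ) {A B : Set X} (hA : A ∈ 𝒜) (hB : B ∈ 𝒜)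
    (hAB : A ⊆ B) : μ A ≤ μ B := by
  have hd : B = A ∪ (B \ A) := by rw [union_diff_cancel hAB]
  have := hμ.additive A hA (B \ A) (diff_mem hμ.isSetField hB hA) disjoint_sdiff_right
  rw [← hd] at this
  have h0 := hμ.nonneg (B \ A) (diff_mem hμ.isSetField hB hA)
  linarith

lemma oc_bddBelow (hμ : IsCharge 𝒜 μ) (A : Set X) :
    BddBelow (μ '' {B | B ∈ 𝒜 ∧ A ⊆ B}) := by
  refine ⟨0, ?_⟩
  rintro x ⟨B, ⟨hB, -⟩, rfl⟩
  exact hμ.nonneg B hB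

lemma oc_nonempty (hμ : IsCharge 𝒜 μ) (A : Set X) :
    (μ '' {B | B ∈ 𝒜 ∧ A ⊆ B}).Nonempty :=
  ⟨μ univ, ⟨univ, ⟨univ_mem hμ.isSetField, subset_univ A⟩, rfl⟩⟩

lemma oc_le (hμ : IsCharge 𝒜 μ) {A B : Set X} (hB : B ∈ 𝒜) (hAB : A ⊆ B) :
    outerCharge 𝒜 μ A ≤ μ B :=
  csInf_le (oc_bddBelow hμ A) ⟨B, ⟨hB, hAB⟩, rfl⟩

lemma oc_mono (hμ : IsCharge 𝒜 μ) {A B : Set X} (hAB : A ⊆ B) :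
    outerCharge 𝒜 μ A ≤ outerCharge 𝒜 μ B := by
  apply csInf_le_csInf (oc_bddBelow hμ A) (oc_nonempty hμ B)
  rintro x ⟨C, ⟨hC, hBC⟩, rfl⟩
  exact ⟨C, ⟨hC, hAB.trans hBC⟩, rfl⟩

lemma oc_union_le (hμ : IsCharge 𝒜 μ) (A B : Set X) :
    outerCharge 𝒜 μ (A ∪ B) ≤ outerCharge 𝒜 μ A + outerCharge 𝒜 μ B := by
  have key : ∀ C ∈ 𝒜, ∀ D ∈ 𝒜, A ⊆ C → B ⊆ D →
      outerCharge 𝒜 μ (A ∪ B) ≤ μ C + μ D := by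
    intro C hC D hD hAC hBD
    have h1 : outerCharge 𝒜 μ (A ∪ B) ≤ μ (C ∪ D) :=
      oc_le hμ (hμ.isSetField.union_mem _ hC _ hD) (union_subset_union hAC hBD)
    have h2 : μ (C ∪ D) ≤ μ C + μ D := by
      have heq : C ∪ D = C ∪ (D \ C) := by rw [union_diff_self]
      have := hμ.additive C hC (D \ C) (diff_mem hμ.isSetField hD hC) disjoint_sdiff_right
      rw [← heq] at this
      have := mono hμ (diff_mem hμ.isSetField hD hC) hD diff_subset
      linarith [mono hμ (diff_mem hμ.isSetField hD hC) hD diff_subset]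
    linarith
  -- reduce: oc(A∪B) - oc B ≤ oc A etc
  have h1 : ∀ D ∈ 𝒜, B ⊆ D → outerCharge 𝒜 μ (A ∪ B) - μ D ≤ outerCharge 𝒜 μ A := by
    intro D hD hBD
    apply le_csInf (oc_nonempty hμ A)
    rintro x ⟨C, ⟨hC, hAC⟩, rfl⟩
    linarith [key C hC D hD hAC hBD]
  have h2 : outerCharge 𝒜 μ (A ∪ B) - outerCharge 𝒜 μ A ≤ outerCharge 𝒜 μ B := by
    apply le_csInf (oc_nonempty hμ B)
    rintro x ⟨D, ⟨hD, hBD⟩, rfl⟩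
    linarith [h1 D hD hBD]
  linarith

/-- finite unions over a Finset stay in the field -/
lemma finset_union_mem (h : IsSetField 𝒜) {ι : Type*} (s : Finset ι) (A : ι → Set X)
    (hA : ∀ i ∈ s, A i ∈ 𝒜) : (⋃ i ∈ s, A i) ∈ 𝒜 := by
  classical
  induction s using Finset.induction_on with
  | empty => simpa using h.empty_mem
  | @insert a s hni ih =>
    rw [Finset.set_biUnion_insert]
    exact h.union_mem _ (hA a (Finset.mem_insert_self a s)) _
      (ih fun i hi => hA i (Finset.mem_insert_of_mem hi))

/-- sum of charges of pairwise disjoint sets in the field is at most μ univ -/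
lemma sum_le_univ (hμ : IsCharge 𝒜 μ) {ι : Type*} (s : Finset ι) (B : ι → Set X)
    (hB : ∀ i ∈ s, B i ∈ 𝒜)
    (hd : ∀ i ∈ s, ∀ j ∈ s, i ≠ j → Disjoint (B i) (B j)) :
    ∑ i ∈ s, μ (B i) ≤ μ univ := by
  classical
  have key : ∑ i ∈ s, μ (B i) = μ (⋃ i ∈ s, B i) := by
    induction s using Finset.induction_on with
    | empty => simpa using hμ.empty.symm
    | @insert a s hni ih =>
      rw [Finset.sum_insert hni, Finset.set_biUnion_insert]
      have hdisj : Disjoint (B a) (⋃ i ∈ s, B i) := by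
        refine disjoint_iUnion₂_right.mpr fun i hi => ?_
        exact hd a (Finset.mem_insert_self a s) i (Finset.mem_insert_of_mem hi)
          (by rintro rfl; exact hni hi)
      rw [hμ.additive (B a) (hB a (Finset.mem_insert_self a s)) _
        (finset_union_mem hμ.isSetField s B fun i hi => hB i (Finset.mem_insert_of_mem hi)) hdisj]
      rw [ih (fun i hi => hB i (Finset.mem_insert_of_mem hi))
        (fun i hi j hj => hd i (Finset.mem_insert_of_mem hi) j (Finset.mem_insert_of_mem hj))]
  rw [key]
  exact mono hμ (finset_union_mem hμ.isSetField s B hB) (univ_mem hμ.isSetField)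
    (subset_univ _)

/-- preimages of simple functions lie in the field -/
lemma simple_preimage_mem (h : IsSetField 𝒜) {g : X → ℝ} (hg : IsSimpleFn 𝒜 g)
    (S : Set ℝ) : g ⁻¹' S ∈ 𝒜 := by
  classical
  obtain ⟨n, c, A, hA, hdisj, hcover, hval⟩ := hg
  have hgval : ∀ (x : X) (k : Fin n), x ∈ A k → g x = c k := by
    intro x k hk
    rw [hval x]
    rw [Finset.sum_eq_single k]
    · simp [indicator_of_mem hk]
    · intro j _ hj
      have : x ∉ A j := fun hx => (hdisj hj.symm).ne_of_mem hk hx rfl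
      simp [indicator_of_notMem this]
    · simp
  have : g ⁻¹' S = ⋃ k ∈ Finset.univ.filter (fun k => c k ∈ S), A k := by
    ext x
    obtain ⟨k₀, hk₀⟩ : ∃ k, x ∈ A k := by
      have : x ∈ ⋃ k, A k := hcover ▸ mem_univ x
      simpa using this
    simp only [mem_preimage, mem_iUnion, Finset.mem_filter, Finset.mem_univ, true_and]
    constructor
    · intro hx; exact ⟨k₀, (hgval x k₀ hk₀) ▸ hx, hk₀⟩
    · rintro ⟨k, hkS, hk⟩; rwa [hgval x k hk]
  rw [this]
  exact finset_union_mem h _ _ fun i _ => hA i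

end CA

namespace CA

variable {X : Type*} {𝒜 : Set (Set X)} {μ : Set X → ℝ}

lemma atom_set_finite (hμ : IsCharge 𝒜 μ) {f : X → ℝ} (hf : MemL0 𝒜 μ f)
    {c : ℝ} (hc : 0 < c) :
    {y : ℝ | ∀ δ > (0:ℝ), c ≤ outerCharge 𝒜 μ (f ⁻¹' Icc (y - δ) (y + δ))}.Finite := by
  classical
  by_contra hinf
  rw [← Set.Infinite] at hinf
  set M : ℕ := ⌈2 * μ univ / c⌉₊ with hM
  obtain ⟨T, hTsub, hTcard⟩ := hinf.exists_subset_card_eq (M + 2)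
  -- choose δ separating the points of T
  have hT2 : 1 < T.card := by omega
  obtain ⟨a, ha, b, hb, hab⟩ := Finset.one_lt_card.mp hT2
  set G : Finset ℝ := T.offDiag.image (fun p => |p.1 - p.2|) with hG
  have hGne : G.Nonempty := ⟨|a - b|, Finset.mem_image.mpr ⟨(a, b),
    Finset.mem_offDiag.mpr ⟨ha, hb, hab⟩, rfl⟩⟩
  set g : ℝ := G.min' hGne with hg
  have hgpos : 0 < g := by
    obtain ⟨p, hp, hpe⟩ := Finset.mem_image.mp (G.min'_mem hGne)
    have hp' := Finset.mem_offDiag.mp hp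
    rw [hg, ← hpe]
    exact abs_sub_pos.mpr hp'.2.2
  set δ : ℝ := g / 5 with hδdef
  have hδ : 0 < δ := by positivity
  have hsep : ∀ y ∈ T, ∀ y' ∈ T, y ≠ y' → 4 * δ < |y - y'| := by
    intro y hy y' hy' hne
    have hle : g ≤ |y - y'| := G.min'_le _ (Finset.mem_image.mpr
      ⟨(y, y'), Finset.mem_offDiag.mpr ⟨hy, hy', hne⟩, rfl⟩)
    rw [hδdef]; linarith
  -- choose a simple function close to f
  obtain ⟨fn, hsimp, hhazy⟩ := hf
  obtain ⟨N, hN⟩ := ((hhazy δ hδ).eventually_lt_const (half_pos hc)).exists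
  set E : Set X := {x | δ < |fn N x - f x|} with hE
  set B : ℝ → Set X := fun y => fn N ⁻¹' Icc (y - 2*δ) (y + 2*δ) with hB
  have hBmem : ∀ y, B y ∈ 𝒜 := fun y =>
    simple_preimage_mem hμ.isSetField (hsimp N) _
  have hBd : ∀ y ∈ T, ∀ y' ∈ T, y ≠ y' → Disjoint (B y) (B y') := by
    intro y hy y' hy' hne
    rw [Set.disjoint_left]
    intro x hx hx'
    simp only [hB, mem_preimage, mem_Icc] at hx hx'
    have habs : |y - y'| ≤ 4 * δ := abs_le.mpr ⟨by linarith, by linarith⟩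
    exact absurd habs (not_le.mpr (hsep y hy y' hy' hne))
  -- per-element bound
  have hper : ∀ y ∈ T, c / 2 ≤ μ (B y) := by
    intro y hy
    have hyS := hTsub hy
    have h1 : c ≤ outerCharge 𝒜 μ (f ⁻¹' Icc (y - δ) (y + δ)) := hyS δ hδ
    have hsub : f ⁻¹' Icc (y - δ) (y + δ) ⊆ B y ∪ E := by
      intro x hx
      simp only [mem_preimage, mem_Icc] at hx
      by_cases hxe : δ < |fn N x - f x|
      · exact Or.inr hxe
      · left
        push_neg at hxe
        rw [abs_le] at hxe
        simp only [hB, mem_preimage, mem_Icc]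
        constructor <;> linarith [hxe.1, hxe.2, hx.1, hx.2]
    have h2 : outerCharge 𝒜 μ (f ⁻¹' Icc (y - δ) (y + δ)) ≤ μ (B y) + outerCharge 𝒜 μ E :=
      le_trans (oc_mono hμ hsub) (le_trans (oc_union_le hμ _ _)
        (by linarith [oc_le hμ (hBmem y) subset_rfl]))
    have h3 : outerCharge 𝒜 μ E < c / 2 := hN
    linarith
  -- sum bound
  have hsum : (T.card : ℝ) * (c / 2) ≤ ∑ y ∈ T, μ (B y) := by
    have := Finset.card_nsmul_le_sum T (fun y => μ (B y)) (c / 2) hper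
    simpa [nsmul_eq_mul] using this
  have hsum2 : ∑ y ∈ T, μ (B y) ≤ μ univ :=
    sum_le_univ hμ T B (fun y _ => hBmem y) hBd
  have hceil : 2 * μ univ / c ≤ (M : ℝ) := Nat.le_ceil _
  have hMc : 2 * μ univ ≤ (M : ℝ) * c := by
    rw [div_le_iff₀ hc] at hceil; linarith
  have hcard : ((M : ℝ) + 2) * (c / 2) ≤ μ univ := by
    have : (T.card : ℝ) = (M : ℝ) + 2 := by rw [hTcard]; push_cast; ring
    rw [this] at hsum; linarith
  nlinarith

end CA


/-- For `f ∈ L₀`, there are at most countably many `y ∈ ℝ` with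
`lim_{δ→0} μ*(f⁻¹[y-δ, y+δ]) > 0` (equivalently, the inferior bound over `δ > 0`
is bounded away from `0`, the limit existing by monotonicity). -/
theorem countable_atoms {X : Type*} (𝒜 : Set (Set X)) (μ : Set X → ℝ)
    (hμ : IsCharge 𝒜 μ) (f : X → ℝ) (hf : MemL0 𝒜 μ f) :
    Set.Countable {y : ℝ | ∃ c > (0 : ℝ), ∀ δ > (0 : ℝ),
      c ≤ outerCharge 𝒜 μ (f ⁻¹' Set.Icc (y - δ) (y + δ))} := by
  have hsub : {y : ℝ | ∃ c > (0 : ℝ), ∀ δ > (0 : ℝ),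
      c ≤ outerCharge 𝒜 μ (f ⁻¹' Set.Icc (y - δ) (y + δ))} ⊆
      ⋃ n : ℕ, {y : ℝ | ∀ δ > (0:ℝ),
        1 / (n + 1 : ℝ) ≤ outerCharge 𝒜 μ (f ⁻¹' Set.Icc (y - δ) (y + δ))} := by
    rintro y ⟨c, hc, hy⟩
    obtain ⟨n, hn⟩ := exists_nat_one_div_lt hc
    exact mem_iUnion.mpr ⟨n, fun δ hδ => le_trans hn.le (hy δ hδ)⟩
  refine Set.Countable.mono hsub (Set.countable_iUnion fun n => ?_)
  exact (CA.atom_set_finite hμ hf (by positivity)).countable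
end

section
/- Let (X,𝒜,μ) be a bounded charge space and let f : X → ℝ. Then f ∈ L0(X,𝒜,μ) if and only if both of the following hold: (a) there exists a countable set C ⊂ ℝ such that f⁻¹(y,∞) belongs to the Peano-Jordan completion 𝒜̄ for all y ∈ ℝ∖C; and (b) f is smooth. -/
open Filter Set Topology

namespace ChargeAux

variable {X : Type*} {𝒜 : Set (Set X)} {μ : Set X → ℝ}

lemma univ_mem (hμ : IsCharge 𝒜 μ) : (Set.univ : Set X) ∈ 𝒜 := by
  have := hμ.isSetField.compl_mem ∅ hμ.isSetField.empty_mem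
  simpa using this

lemma inter_mem (hμ : IsCharge 𝒜 μ) {A B : Set X} (hA : A ∈ 𝒜) (hB : B ∈ 𝒜) :
    A ∩ B ∈ 𝒜 := by
  have := hμ.isSetField.compl_mem _
    (hμ.isSetField.union_mem _ (hμ.isSetField.compl_mem _ hA) _ (hμ.isSetField.compl_mem _ hB))
  simpa [Set.compl_union] using this

lemma diff_mem (hμ : IsCharge 𝒜 μ) {A B : Set X} (hA : A ∈ 𝒜) (hB : B ∈ 𝒜) :
    A \ B ∈ 𝒜 := by
  rw [Set.diff_eq]
  exact inter_mem hμ hA (hμ.isSetField.compl_mem _ hB)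

lemma mono (hμ : IsCharge 𝒜 μ) {A B : Set X} (hA : A ∈ 𝒜) (hB : B ∈ 𝒜) (h : A ⊆ B) :
    μ A ≤ μ B := by
  have h1 : μ (A ∪ (B \ A)) = μ A + μ (B \ A) :=
    hμ.additive A hA _ (diff_mem hμ hB hA) disjoint_sdiff_right
  rw [Set.union_diff_cancel h] at h1
  have := hμ.nonneg _ (diff_mem hμ hB hA)
  linarith

lemma subadd (hμ : IsCharge 𝒜 μ) {A B : Set X} (hA : A ∈ 𝒜) (hB : B ∈ 𝒜) :
    μ (A ∪ B) ≤ μ A + μ B := by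
  have h1 : μ (A ∪ (B \ A)) = μ A + μ (B \ A) :=
    hμ.additive A hA _ (diff_mem hμ hB hA) disjoint_sdiff_right
  rw [Set.union_diff_self] at h1
  have := mono hμ (diff_mem hμ hB hA) hB Set.diff_subset
  linarith

lemma coverSet_nonempty (hμ : IsCharge 𝒜 μ) (A : Set X) :
    (μ '' {B | B ∈ 𝒜 ∧ A ⊆ B}).Nonempty :=
  ⟨μ Set.univ, Set.mem_image_of_mem _ ⟨univ_mem hμ, Set.subset_univ A⟩⟩

lemma coverSet_bddBelow (hμ : IsCharge 𝒜 μ) (A : Set X) :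
    BddBelow (μ '' {B | B ∈ 𝒜 ∧ A ⊆ B}) := by
  refine ⟨0, ?_⟩
  rintro x ⟨B, ⟨hB, -⟩, rfl⟩
  exact hμ.nonneg _ hB

lemma outer_nonneg (hμ : IsCharge 𝒜 μ) (A : Set X) : 0 ≤ outerCharge 𝒜 μ A :=
  le_csInf (coverSet_nonempty hμ A) (by rintro x ⟨B, ⟨hB, -⟩, rfl⟩; exact hμ.nonneg _ hB)

lemma outer_le (hμ : IsCharge 𝒜 μ) {A B : Set X} (hB : B ∈ 𝒜) (h : A ⊆ B) :
    outerCharge 𝒜 μ A ≤ μ B :=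
  csInf_le (coverSet_bddBelow hμ A) (Set.mem_image_of_mem _ ⟨hB, h⟩)

lemma outer_mono (hμ : IsCharge 𝒜 μ) {A B : Set X} (h : A ⊆ B) :
    outerCharge 𝒜 μ A ≤ outerCharge 𝒜 μ B := by
  refine le_csInf (coverSet_nonempty hμ B) ?_
  rintro x ⟨C, ⟨hC, hBC⟩, rfl⟩
  exact outer_le hμ hC (h.trans hBC)

lemma outer_eq (hμ : IsCharge 𝒜 μ) {A : Set X} (hA : A ∈ 𝒜) :
    outerCharge 𝒜 μ A = μ A := by
  refine le_antisymm (outer_le hμ hA subset_rfl) ?_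
  refine le_csInf (coverSet_nonempty hμ A) ?_
  rintro x ⟨B, ⟨hB, hAB⟩, rfl⟩
  exact mono hμ hA hB hAB

lemma exists_cover (hμ : IsCharge 𝒜 μ) (A : Set X) {ε : ℝ} (hε : 0 < ε) :
    ∃ B ∈ 𝒜, A ⊆ B ∧ μ B < outerCharge 𝒜 μ A + ε := by
  obtain ⟨x, hx, hlt⟩ := exists_lt_of_csInf_lt (coverSet_nonempty hμ A)
    (show outerCharge 𝒜 μ A < outerCharge 𝒜 μ A + ε by linarith)
  obtain ⟨B, ⟨hB, hAB⟩, rfl⟩ := hx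
  exact ⟨B, hB, hAB, hlt⟩

lemma outer_union_le (hμ : IsCharge 𝒜 μ) (A B : Set X) :
    outerCharge 𝒜 μ (A ∪ B) ≤ outerCharge 𝒜 μ A + outerCharge 𝒜 μ B := by
  refine le_of_forall_pos_le_add fun ε hε => ?_
  obtain ⟨A', hA', hAA, hμA⟩ := exists_cover hμ A (half_pos hε)
  obtain ⟨B', hB', hBB, hμB⟩ := exists_cover hμ B (half_pos hε)
  have h1 : outerCharge 𝒜 μ (A ∪ B) ≤ μ (A' ∪ B') :=
    outer_le hμ (hμ.isSetField.union_mem _ hA' _ hB') (Set.union_subset_union hAA hBB)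
  have h2 := subadd hμ hA' hB'
  linarith

lemma finset_union_mem (hμ : IsCharge 𝒜 μ) {ι : Type*} (s : Finset ι) (A : ι → Set X)
    (h : ∀ i ∈ s, A i ∈ 𝒜) : (⋃ i ∈ s, A i) ∈ 𝒜 := by
  classical
  induction s using Finset.induction with
  | empty => simpa using hμ.isSetField.empty_mem
  | @insert a s hx ih =>
    rw [Finset.set_biUnion_insert]
    exact hμ.isSetField.union_mem _ (h a (Finset.mem_insert_self a s)) _
      (ih fun i hi => h i (Finset.mem_insert_of_mem hi))

lemma finset_inter_mem (hμ : IsCharge 𝒜 μ) {ι : Type*} (s : Finset ι) (A : ι → Set X)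
    (h : ∀ i ∈ s, A i ∈ 𝒜) : (⋂ i ∈ s, A i) ∈ 𝒜 := by
  classical
  induction s using Finset.induction with
  | empty => simpa using univ_mem hμ
  | @insert a s hx ih =>
    rw [Finset.set_biInter_insert]
    exact inter_mem hμ (h a (Finset.mem_insert_self a s))
      (ih fun i hi => h i (Finset.mem_insert_of_mem hi))

lemma outer_finset_union_le (hμ : IsCharge 𝒜 μ) {ι : Type*} (s : Finset ι) (A : ι → Set X) :
    outerCharge 𝒜 μ (⋃ i ∈ s, A i) ≤ ∑ i ∈ s, outerCharge 𝒜 μ (A i) := by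
  classical
  induction s using Finset.induction with
  | empty =>
    simp only [Finset.sum_empty]
    have h0 : (⋃ i ∈ (∅ : Finset ι), A i) = (∅ : Set X) := by simp
    rw [h0]
    have := outer_le hμ hμ.isSetField.empty_mem (subset_refl (∅ : Set X))
    rw [hμ.empty] at this
    linarith
  | @insert a s hx ih =>
    rw [Finset.set_biUnion_insert, Finset.sum_insert hx]
    exact (outer_union_le hμ _ _).trans (by linarith)

lemma eval_indicator_sum {n : ℕ} (c : Fin n → ℝ) (A : Fin n → Set X)
    (hdis : Pairwise fun i j => Disjoint (A i) (A j)) {x : X} {i : Fin n} (hx : x ∈ A i) :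
    ∑ k, (A k).indicator (fun _ => c k) x = c i := by
  rw [Finset.sum_eq_single i]
  · exact Set.indicator_of_mem hx _
  · intro k _ hk
    exact Set.indicator_of_notMem (fun hxk => (hdis hk).ne_of_mem hxk hx rfl) _
  · exact fun h => absurd (Finset.mem_univ i) h

lemma simple_preimage_Ioi (hμ : IsCharge 𝒜 μ)
    {f : X → ℝ} (hf : IsSimpleFn 𝒜 f) (y : ℝ) : f ⁻¹' Set.Ioi y ∈ 𝒜 := by
  classical
  obtain ⟨n, c, A, hmem, hdis, hcov, heq⟩ := hf
  have key : f ⁻¹' Set.Ioi y = ⋃ k ∈ Finset.univ.filter (fun k => y < c k), A k := by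
    ext x
    obtain ⟨i, hi⟩ : ∃ i, x ∈ A i := Set.mem_iUnion.1 (hcov ▸ Set.mem_univ x)
    have hfx : f x = c i := (heq x).trans (eval_indicator_sum c A hdis hi)
    simp only [Set.mem_preimage, Set.mem_Ioi, Set.mem_iUnion]
    constructor
    · intro h
      exact ⟨i, by simp [hfx ▸ h], hi⟩
    · rintro ⟨k, hk, hxk⟩
      have hik : i = k := by
        by_contra hne
        exact (hdis hne).ne_of_mem hi hxk rfl
      simp only [Finset.mem_filter] at hk
      rw [hfx, hik]
      exact hk.2
  rw [key]
  exact finset_union_mem hμ _ _ (fun i _ => hmem i)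

lemma simple_bounded {f : X → ℝ} (hf : IsSimpleFn 𝒜 f) : ∃ M : ℝ, ∀ x, |f x| ≤ M := by
  obtain ⟨n, c, A, hmem, hdis, hcov, heq⟩ := hf
  refine ⟨∑ k, |c k|, fun x => ?_⟩
  obtain ⟨i, hi⟩ : ∃ i, x ∈ A i := Set.mem_iUnion.1 (hcov ▸ Set.mem_univ x)
  rw [heq x, eval_indicator_sum c A hdis hi]
  exact Finset.single_le_sum (fun k _ => abs_nonneg (c k)) (Finset.mem_univ i)

lemma exists_mem_Ioo_not_mem {a b : ℝ} (h : a < b) {C : Set ℝ} (hC : C.Countable) :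
    ∃ y, y ∈ Set.Ioo a b ∧ y ∉ C := by
  by_contra hcon
  push_neg at hcon
  have hsub : Set.Ioo a b ⊆ C := hcon
  have hcc : (Set.Ioo a b).Countable := hC.mono hsub
  have h1 : Cardinal.mk (Set.Ioo a b) ≤ Cardinal.aleph0 :=
    Cardinal.mk_le_aleph0_iff.2 (Set.countable_coe_iff.2 hcc)
  rw [Cardinal.mk_Ioo_real h] at h1
  exact absurd h1 (not_le.2 Cardinal.aleph0_lt_continuum)

end ChargeAux


namespace ChargeAux

variable {X : Type*} {𝒜 : Set (Set X)} {μ : Set X → ℝ}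

lemma approx (hμ : IsCharge 𝒜 μ) {f : X → ℝ} {C : Set ℝ} (hC : C.Countable)
    (hpj : ∀ y : ℝ, y ∉ C → f ⁻¹' Set.Ioi y ∈ pjField 𝒜 μ)
    (hsm : SmoothFn 𝒜 μ f) {ε : ℝ} (hε : 0 < ε) :
    ∃ g : X → ℝ, IsSimpleFn 𝒜 g ∧ outerCharge 𝒜 μ {x | ε < |g x - f x|} < ε := by
  classical
  obtain ⟨k, hk, hkε⟩ := hsm (ε/2) (half_pos hε)
  set m : ℕ := ⌈4*k/ε⌉₊ + 1 with hm
  have hm1 : 1 ≤ m := Nat.le_add_left 1 _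
  have hmk : 4*k/ε + 1 ≤ (m:ℝ) := by
    have h1 : 4*k/ε ≤ (⌈4*k/ε⌉₊ : ℝ) := Nat.le_ceil _
    have h2 : ((⌈4*k/ε⌉₊ : ℕ) : ℝ) + 1 = (m : ℝ) := by rw [hm]; push_cast; ring
    linarith
  have hmtop : k + 3*ε/8 ≤ -k + m*(ε/2) - ε/8 := by
    have h4 : 4*k + ε ≤ (m:ℝ)*ε := by
      have := (div_le_iff₀ hε).1 (by linarith : 4*k/ε ≤ (m:ℝ) - 1)
      linarith
    linarith
  -- grid points
  have hsel : ∀ j : ℕ, ∃ z : ℝ, z ∈ Set.Ioo (-k + j*(ε/2) - ε/8) (-k + j*(ε/2)) ∧ z ∉ C :=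
    fun j => exists_mem_Ioo_not_mem (by linarith) hC
  choose y hyI hyC using hsel
  have hy0 : y 0 < -k := by
    have := (hyI 0).2; simpa using this
  have hym : k < y m := by
    have := (hyI m).1
    linarith
  have hystep : ∀ j : ℕ, y j < y (j+1) ∧ y (j+1) - y j ≤ ε := by
    intro j
    have h1 := (hyI j).1
    have h2 := (hyI j).2
    have h3 := (hyI (j+1)).1
    have h4 := (hyI (j+1)).2
    push_cast at h1 h2 h3 h4
    constructor <;> nlinarith
  -- approximating sets
  have hmpos : (0:ℝ) < ε/(2*m) := by positivity
  have hBC : ∀ j : ℕ, ∃ B, B ∈ 𝒜 ∧ ∃ Cs, Cs ∈ 𝒜 ∧ B ⊆ f ⁻¹' Set.Ioi (y j) ∧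
      f ⁻¹' Set.Ioi (y j) ⊆ Cs ∧ μ (Cs \ B) < ε/(2*m) :=
    fun j => hpj (y j) (hyC j) (ε/(2*m)) hmpos
  choose B hB Cs hCs hBA hAC hsmall using hBC
  -- nested intersections
  set T : ℕ → Set X := fun j => if j ≤ m then ⋂ i ∈ Finset.Icc 1 j, B i else ∅ with hT
  have hTmem : ∀ j, T j ∈ 𝒜 := by
    intro j
    simp only [hT]
    split_ifs
    · exact finset_inter_mem hμ _ _ fun i _ => hB i
    · exact hμ.isSetField.empty_mem
  have hT0 : T 0 = Set.univ := by
    simp only [hT, if_pos (Nat.zero_le m)]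
    apply Set.eq_univ_of_forall
    intro x
    simp only [Set.mem_iInter]
    intro i hi
    exact absurd (Finset.mem_Icc.1 hi) (by omega)
  have hTB : ∀ {j : ℕ}, j ≤ m → ∀ {x : X}, x ∈ T j → ∀ l, 1 ≤ l → l ≤ j → x ∈ B l := by
    intro j hj x hx l hl1 hl2
    simp only [hT, if_pos hj, Set.mem_iInter] at hx
    exact hx l (Finset.mem_Icc.2 ⟨hl1, hl2⟩)
  have hTB' : ∀ {j : ℕ}, j ≤ m → ∀ {x : X}, (∀ l, 1 ≤ l → l ≤ j → x ∈ B l) → x ∈ T j := by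
    intro j hj x hx
    simp only [hT, if_pos hj, Set.mem_iInter]
    intro l hl
    exact hx l (Finset.mem_Icc.1 hl).1 (Finset.mem_Icc.1 hl).2
  have hTanti : ∀ {i j : ℕ}, i ≤ j → T j ⊆ T i := by
    intro i j hij x hx
    by_cases hjm : j ≤ m
    · exact hTB' (hij.trans hjm) fun l hl1 hl2 => hTB hjm hx l hl1 (hl2.trans hij)
    · simp only [hT, if_neg hjm] at hx
      exact absurd hx (Set.notMem_empty x)
  have hTm1 : T (m+1) = ∅ := by
    simp only [hT, if_neg (by omega : ¬ m + 1 ≤ m)]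
  -- partition
  have hcov : (⋃ j : Fin (m+1), (T (j:ℕ) \ T ((j:ℕ)+1))) = Set.univ := by
    ext x
    simp only [Set.mem_iUnion, Set.mem_univ, iff_true]
    have hex : ∃ n, x ∉ T n := ⟨m+1, by rw [hTm1]; exact Set.notMem_empty x⟩
    have hj0 : x ∉ T (Nat.find hex) := Nat.find_spec hex
    have hj0pos : 0 < Nat.find hex := by
      rcases Nat.eq_zero_or_pos (Nat.find hex) with h | h
      · exfalso; apply hj0; rw [h, hT0]; trivial
      · exact h
    have hjle : Nat.find hex ≤ m + 1 :=
      Nat.find_le (by rw [hTm1]; exact Set.notMem_empty x)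
    have hmem : x ∈ T (Nat.find hex - 1) := by
      by_contra h
      exact absurd h (Nat.find_min hex (by omega))
    refine ⟨⟨Nat.find hex - 1, by omega⟩, hmem, ?_⟩
    rw [show Nat.find hex - 1 + 1 = Nat.find hex from by omega]
    exact hj0
  have hdisjN : ∀ {a b : ℕ}, a < b → Disjoint (T a \ T (a+1)) (T b \ T (b+1)) := by
    intro a b hab
    rw [Set.disjoint_left]
    rintro x ⟨hx1, hx2⟩ ⟨hx3, hx4⟩
    exact hx2 (hTanti (by omega : a + 1 ≤ b) hx3)
  have hdisj : Pairwise fun i j : Fin (m+1) =>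
      Disjoint (T (i:ℕ) \ T ((i:ℕ)+1)) (T (j:ℕ) \ T ((j:ℕ)+1)) := by
    intro i j hne
    rcases lt_or_gt_of_ne hne with h | h
    · exact hdisjN (Fin.lt_def.1 h)
    · exact (hdisjN (Fin.lt_def.1 h)).symm
  -- the simple function
  refine ⟨fun x => ∑ j : Fin (m+1), (T (j:ℕ) \ T ((j:ℕ)+1)).indicator (fun _ => y (j:ℕ)) x,
    ⟨m+1, fun j => y (j:ℕ), fun j => T (j:ℕ) \ T ((j:ℕ)+1),
      fun j => diff_mem hμ (hTmem _) (hTmem _), hdisj, hcov, fun x => rfl⟩, ?_⟩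
  -- error estimate
  set g : X → ℝ := fun x => ∑ j : Fin (m+1), (T (j:ℕ) \ T ((j:ℕ)+1)).indicator
    (fun _ => y (j:ℕ)) x with hg
  have hsubN : {x | ε < |g x - f x|} ⊆
      {x | k < |f x|} ∪ ⋃ j ∈ Finset.Icc 1 m, (Cs j \ B j) := by
    intro x hx
    by_contra hxN
    simp only [Set.mem_union, Set.mem_iUnion, not_or, not_exists] at hxN
    obtain ⟨hfk, hgood⟩ := hxN
    simp only [Set.mem_setOf_eq, not_lt] at hfk
    have hiff : ∀ j, 1 ≤ j → j ≤ m → (x ∈ B j ↔ y j < f x) := by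
      intro j hj1 hj2
      constructor
      · intro hb
        exact Set.mem_Ioi.1 (Set.mem_preimage.1 (hBA j hb))
      · intro ha
        have hCsx : x ∈ Cs j := hAC j (Set.mem_preimage.2 (Set.mem_Ioi.2 ha))
        by_contra hbx
        exact hgood j (Finset.mem_Icc.2 ⟨hj1, hj2⟩) ⟨hCsx, hbx⟩
    obtain ⟨i, hTi, hTi1⟩ : ∃ i : Fin (m+1), x ∈ T (i:ℕ) ∧ x ∉ T ((i:ℕ)+1) := by
      have : x ∈ ⋃ j : Fin (m+1), (T (j:ℕ) \ T ((j:ℕ)+1)) := hcov ▸ Set.mem_univ x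
      obtain ⟨i, hi⟩ := Set.mem_iUnion.1 this
      exact ⟨i, hi.1, hi.2⟩
    have hgx : g x = y (i:ℕ) :=
      eval_indicator_sum (fun j : Fin (m+1) => y (j:ℕ)) _ hdisj ⟨hTi, hTi1⟩
    have him : (i:ℕ) ≤ m := by omega
    have hflow : y (i:ℕ) < f x := by
      rcases Nat.eq_zero_or_pos (i:ℕ) with h0 | hpos
      · rw [h0]
        have : -k ≤ f x := neg_le_of_abs_le hfk
        linarith
      · exact (hiff _ hpos him).1 (hTB him hTi _ hpos le_rfl)
    have hintm : (i:ℕ) < m := by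
      rcases Nat.lt_or_ge (i:ℕ) m with h | h
      · exact h
      · exfalso
        have heq : (i:ℕ) = m := le_antisymm him h
        have : y m < f x := heq ▸ hflow
        have : f x ≤ k := le_trans (le_abs_self _) hfk
        linarith
    have hfhigh : f x ≤ y ((i:ℕ)+1) := by
      by_contra hcon
      push_neg at hcon
      have hBx : x ∈ B ((i:ℕ)+1) := (hiff _ (by omega) (by omega)).2 hcon
      apply hTi1
      refine hTB' (by omega) fun l hl1 hl2 => ?_
      rcases Nat.lt_or_ge l ((i:ℕ)+1) with h | h
      · exact hTB him hTi l hl1 (by omega)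
      · rw [show l = (i:ℕ)+1 from by omega]
        exact hBx
    have hstep := hystep (i:ℕ)
    have : |g x - f x| ≤ ε := by
      rw [hgx, abs_sub_comm, abs_of_nonneg (by linarith)]
      linarith
    simp only [Set.mem_setOf_eq] at hx
    linarith
  -- measure bound
  have h1 : outerCharge 𝒜 μ {x | ε < |g x - f x|} ≤
      outerCharge 𝒜 μ {x | k < |f x|} +
        outerCharge 𝒜 μ (⋃ j ∈ Finset.Icc 1 m, (Cs j \ B j)) :=
    (outer_mono hμ hsubN).trans (outer_union_le hμ _ _)
  have h2 : outerCharge 𝒜 μ (⋃ j ∈ Finset.Icc 1 m, (Cs j \ B j)) < ε/2 := by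
    refine lt_of_le_of_lt (outer_finset_union_le hμ _ _) ?_
    have hlt : ∑ j ∈ Finset.Icc 1 m, outerCharge 𝒜 μ (Cs j \ B j) <
        ∑ _j ∈ Finset.Icc 1 m, ε/(2*m) := by
      refine Finset.sum_lt_sum_of_nonempty ?_ fun j _ => ?_
      · exact ⟨1, Finset.mem_Icc.2 ⟨le_rfl, hm1⟩⟩
      · rw [outer_eq hμ (diff_mem hμ (hCs j) (hB j))]
        exact hsmall j
    have hsum : ∑ _j ∈ Finset.Icc 1 m, ε/(2*m) = ε/2 := by
      rw [Finset.sum_const, Nat.card_Icc]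
      simp only [Nat.add_sub_cancel, nsmul_eq_mul]
      field_simp
    linarith
  linarith
end ChargeAux


/-- `f ∈ L₀(X,𝒜,μ)` iff (a) there is a countable `C ⊂ ℝ` with
`f⁻¹(y,∞) ∈ 𝒜̄` for all `y ∉ C`, and (b) `f` is smooth. -/
theorem T1_measurable_characterisation {X : Type*} (𝒜 : Set (Set X)) (μ : Set X → ℝ)
    (hμ : IsCharge 𝒜 μ) (f : X → ℝ) :
    MemL0 𝒜 μ f ↔
      ((∃ C : Set ℝ, C.Countable ∧ ∀ y : ℝ, y ∉ C → f ⁻¹' Set.Ioi y ∈ pjField 𝒜 μ) ∧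
        SmoothFn 𝒜 μ f) := by
  classical
  constructor
  · rintro ⟨fn, hsimp, hconv⟩
    constructor
    · -- (a): countable exceptional set
      set G : ℝ → ℝ := fun y => outerCharge 𝒜 μ (f ⁻¹' Set.Ioi y) with hGdef
      have hanti : Antitone G := fun a b hab =>
        ChargeAux.outer_mono hμ (Set.preimage_mono (Set.Ioi_subset_Ioi hab))
      refine ⟨{y | ¬ContinuousAt G y}, hanti.countable_not_continuousAt, fun y hy => ?_⟩
      simp only [Set.mem_setOf_eq, not_not] at hy
      intro ε hε
      obtain ⟨δ, hδ, hδG⟩ : ∃ δ > (0:ℝ), G y - ε/5 < G (y + δ) := by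
        obtain ⟨δ0, hδ0, hd⟩ := Metric.continuousAt_iff.1 hy (ε/5) (by linarith)
        refine ⟨δ0/2, by linarith, ?_⟩
        have hdist : dist (y + δ0/2) y < δ0 := by
          rw [Real.dist_eq]
          rw [show y + δ0/2 - y = δ0/2 by ring, abs_of_pos (by linarith)]
          linarith
        have := hd hdist
        rw [Real.dist_eq] at this
        have := abs_lt.1 this
        linarith [this.1]
      obtain ⟨n, hn⟩ := ((hconv (δ/2) (by linarith)).eventually_lt_const
        (show (0:ℝ) < ε/5 by linarith)).exists
      set E := {x | δ/2 < |fn n x - f x|} with hEdef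
      obtain ⟨E', hE', hEE', hμE'⟩ := ChargeAux.exists_cover hμ E
        (show (0:ℝ) < ε/5 - outerCharge 𝒜 μ E by linarith)
      have hμE'lt : μ E' < ε/5 := by linarith
      have hB0 : (fn n) ⁻¹' Set.Ioi (y + δ/2) ∈ 𝒜 :=
        ChargeAux.simple_preimage_Ioi hμ (hsimp n) _
      set B := (fn n) ⁻¹' Set.Ioi (y + δ/2) \ E' with hBdef
      have hBmem : B ∈ 𝒜 := ChargeAux.diff_mem hμ hB0 hE'
      have hBsub : B ⊆ f ⁻¹' Set.Ioi y := by
        rintro x ⟨hx1, hx2⟩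
        have hxE : x ∉ E := fun h => hx2 (hEE' h)
        simp only [hEdef, Set.mem_setOf_eq, not_lt] at hxE
        simp only [Set.mem_preimage, Set.mem_Ioi] at hx1 ⊢
        linarith [le_abs_self (fn n x - f x)]
      obtain ⟨Cc, hCc, hCsub, hCμ⟩ := ChargeAux.exists_cover hμ (f ⁻¹' Set.Ioi y)
        (show (0:ℝ) < ε/5 by linarith)
      have hlow : G (y + δ) ≤ μ B + μ E' := by
        have hsub2 : f ⁻¹' Set.Ioi (y + δ) ⊆ B ∪ E' := by
          intro x hx
          by_cases hxE' : x ∈ E'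
          · exact Or.inr hxE'
          · left
            have hxE : x ∉ E := fun h => hxE' (hEE' h)
            simp only [hEdef, Set.mem_setOf_eq, not_lt] at hxE
            simp only [Set.mem_preimage, Set.mem_Ioi] at hx
            refine ⟨?_, hxE'⟩
            simp only [Set.mem_preimage, Set.mem_Ioi]
            linarith [neg_abs_le (fn n x - f x)]
        calc G (y+δ) ≤ μ (B ∪ E') :=
              ChargeAux.outer_le hμ (hμ.isSetField.union_mem _ hBmem _ hE') hsub2
          _ ≤ μ B + μ E' := ChargeAux.subadd hμ hBmem hE'
      refine ⟨B, hBmem, Cc, hCc, hBsub, hCsub, ?_⟩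
      have hBC : B ⊆ Cc := hBsub.trans hCsub
      have hdiffeq : μ (Cc \ B) = μ Cc - μ B := by
        have hadd := hμ.additive _ (ChargeAux.diff_mem hμ hCc hBmem) _ hBmem disjoint_sdiff_left
        rw [Set.diff_union_of_subset hBC] at hadd
        linarith
      rw [hdiffeq]
      have hGy : outerCharge 𝒜 μ (f ⁻¹' Set.Ioi y) = G y := rfl
      rw [hGy] at hCμ
      linarith
    · -- (b): smoothness
      intro ε hε
      obtain ⟨n, hn⟩ := ((hconv 1 one_pos).eventually_lt_const hε).exists
      obtain ⟨M, hM⟩ := ChargeAux.simple_bounded (hsimp n)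
      refine ⟨|M| + 1, by positivity, lt_of_le_of_lt (ChargeAux.outer_mono hμ ?_) hn⟩
      intro x hx
      simp only [Set.mem_setOf_eq] at hx ⊢
      have h1 := hM x
      have h2 : |f x| - |fn n x| ≤ |fn n x - f x| := by
        rw [abs_sub_comm]
        exact abs_sub_abs_le_abs_sub _ _
      have h3 : M ≤ |M| := le_abs_self M
      linarith
  · rintro ⟨⟨C, hC, hpj⟩, hsm⟩
    have happrox : ∀ n : ℕ, ∃ g : X → ℝ, IsSimpleFn 𝒜 g ∧
        outerCharge 𝒜 μ {x | 1/((n:ℝ)+1) < |g x - f x|} < 1/((n:ℝ)+1) :=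
      fun n => ChargeAux.approx hμ hC hpj hsm (by positivity)
    choose g hgs hge using happrox
    refine ⟨g, hgs, ?_⟩
    intro ε hε
    apply squeeze_zero' (g := fun n : ℕ => 1/((n:ℝ)+1))
    · exact Filter.Eventually.of_forall fun n => ChargeAux.outer_nonneg hμ _
    · obtain ⟨N, hN⟩ := exists_nat_one_div_lt hε
      refine Filter.eventually_atTop.2 ⟨N, fun n hn => ?_⟩
      have hcast : (N:ℝ) + 1 ≤ (n:ℝ) + 1 := by
        have : (N:ℝ) ≤ (n:ℝ) := Nat.cast_le.2 hn
        linarith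
      have h1 : 1/((n:ℝ)+1) ≤ 1/((N:ℝ)+1) :=
        one_div_le_one_div_of_le (by positivity) hcast
      have h1' : 1/((n:ℝ)+1) < ε := lt_of_le_of_lt h1 hN
      have hsub : {x | ε < |g n x - f x|} ⊆ {x | 1/((n:ℝ)+1) < |g n x - f x|} := by
        intro x hx
        simp only [Set.mem_setOf_eq] at hx ⊢
        linarith
      exact (ChargeAux.outer_mono hμ hsub).trans (le_of_lt (hge n))
    · exact tendsto_one_div_add_atTop_nhds_zero_nat
end

section
/- Suppose (X,𝒜,μ) is a complete measure space with μ(X) < ∞ (regarded as a bounded charge space). Then a function f : X → ℝ is T1-measurable if and only if it is measurable in the conventional sense (i.e., f⁻¹(B) ∈ 𝒜 for every Borel set B ⊆ ℝ). -/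
open Filter Set Topology

open MeasureTheory in
private lemma outerCharge_eq_measure {X : Type*} [MeasurableSpace X] (ν : Measure X)
    [IsFiniteMeasure ν] (A : Set X) :
    outerCharge {A : Set X | MeasurableSet A} (fun A => (ν A).toReal) A = (ν A).toReal := by
  refine IsLeast.csInf_eq ⟨⟨toMeasurable ν A, ⟨measurableSet_toMeasurable ν A,
    subset_toMeasurable ν A⟩, by simp [measure_toMeasurable]⟩, ?_⟩
  rintro r ⟨B, ⟨hB, hAB⟩, rfl⟩
  exact ENNReal.toReal_mono (measure_ne_top ν B) (measure_mono hAB)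

private lemma IsSimpleFn.measurable' {X : Type*} [MeasurableSpace X] {f : X → ℝ}
    (h : IsSimpleFn {A : Set X | MeasurableSet A} f) : Measurable f := by
  obtain ⟨n, c, A, hA, -, -, hf⟩ := h
  have : f = fun x => ∑ k, (A k).indicator (fun _ => c k) x := funext hf
  rw [this]
  exact Finset.measurable_sum _ fun k _ => Measurable.indicator measurable_const (hA k)

private lemma isSimpleFn_of_finite {X : Type*} [MeasurableSpace X] (g : X → ℝ)
    (hr : (Set.range g).Finite) (hm : ∀ y : ℝ, MeasurableSet (g ⁻¹' {y})) :
    IsSimpleFn {A : Set X | MeasurableSet A} g := by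
  classical
  set s := hr.toFinset with hs
  refine ⟨s.card, fun k => ((s.equivFin.symm k : s) : ℝ),
    fun k => g ⁻¹' {((s.equivFin.symm k : s) : ℝ)}, fun k => hm _, ?_, ?_, ?_⟩
  · intro i j hij
    rw [Set.disjoint_left]
    intro x hxi hxj
    simp only [Set.mem_preimage, Set.mem_singleton_iff] at hxi hxj
    exact hij (s.equivFin.symm.injective (Subtype.ext (hxi.symm.trans hxj)))
  · ext x
    simp only [Set.mem_iUnion, Set.mem_univ, iff_true, Set.mem_preimage, Set.mem_singleton_iff]
    have hx : g x ∈ s := by simp [hs]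
    exact ⟨s.equivFin ⟨g x, hx⟩, by simp⟩
  · intro x
    have hx : g x ∈ s := by simp [hs]
    set k0 := s.equivFin ⟨g x, hx⟩ with hk0
    have hvk0 : ((s.equivFin.symm k0 : s) : ℝ) = g x := by rw [hk0, Equiv.symm_apply_apply]
    rw [Finset.sum_eq_single k0]
    · rw [Set.indicator_of_mem
        (by simp only [Set.mem_preimage, Set.mem_singleton_iff]; exact hvk0.symm)]
      exact hvk0.symm
    · intro k _ hk
      apply Set.indicator_of_notMem
      simp only [Set.mem_preimage, Set.mem_singleton_iff]
      intro hgx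
      exact hk (s.equivFin.symm.injective (Subtype.ext (hgx.symm.trans hvk0.symm)))
    · intro h; exact absurd (Finset.mem_univ k0) h


open MeasureTheory in
/-- On a complete finite measure space, regarded as a bounded charge
space (with field the measurable sets and charge `A ↦ (ν A).toReal`), a function
`f : X → ℝ` is `T₁`-measurable iff it is measurable in the conventional sense. -/
theorem T1_measurable_iff_measurable {X : Type*} [MeasurableSpace X]
    (ν : Measure X) [IsFiniteMeasure ν]
    (hcomplete : ∀ A N : Set X, MeasurableSet N → ν N = 0 → A ⊆ N → MeasurableSet A)
    (f : X → ℝ) :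
    MemL0 {A : Set X | MeasurableSet A} (fun A => (ν A).toReal) f ↔ Measurable f := by

  constructor
  · -- T1-measurable → measurable
    rintro ⟨fn, hfn, hconv⟩
    have key : ∀ k : ℕ, ∃ n, (ν {x | (1/2:ℝ)^k < |fn n x - f x|}).toReal < (1/2:ℝ)^k := by
      intro k
      have hk : (0:ℝ) < (1/2:ℝ)^k := by positivity
      have h1 := hconv ((1/2:ℝ)^k) hk
      have h2 : Tendsto (fun n => (ν {x | (1/2:ℝ)^k < |fn n x - f x|}).toReal) atTop (𝓝 0) := by
        have : (fun n => outerCharge {A : Set X | MeasurableSet A} (fun A => (ν A).toReal)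
            {x | (1/2:ℝ)^k < |fn n x - f x|}) =
            fun n => (ν {x | (1/2:ℝ)^k < |fn n x - f x|}).toReal := by
          funext n; exact outerCharge_eq_measure ν _
        rwa [this] at h1
      exact (h2.eventually (gt_mem_nhds hk)).exists
    choose N hN using key
    set E : ℕ → Set X := fun k => {x | (1/2:ℝ)^k < |fn (N k) x - f x|} with hE
    set B : ℕ → Set X := fun k => toMeasurable ν (E k) with hB
    have hBmeas : ∀ k, MeasurableSet (B k) := fun k => measurableSet_toMeasurable ν _
    have hBsmall : ∀ k, ν (B k) < ENNReal.ofReal ((1/2:ℝ)^k) := by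
      intro k
      rw [ENNReal.lt_ofReal_iff_toReal_lt (measure_ne_top ν _), hB, measure_toMeasurable]
      exact hN k
    have hsum : ∑' k, ν (B k) ≠ ⊤ := by
      have hle : ∑' k, ν (B k) ≤ ∑' k : ℕ, (1/2 : ENNReal)^k := by
        refine ENNReal.tsum_le_tsum fun k => ?_
        refine le_trans (hBsmall k).le (le_of_eq ?_)
        rw [ENNReal.ofReal_pow (by norm_num : (0:ℝ) ≤ 1/2)]
        norm_num [ENNReal.ofReal_div_of_pos]
      refine ne_top_of_le_ne_top ?_ hle
      rw [ENNReal.tsum_geometric]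
      simp
    have hZ : ν (Filter.limsup B atTop) = 0 := measure_limsup_atTop_eq_zero hsum
    have hZmeas : MeasurableSet (Filter.limsup B atTop) :=
      MeasurableSet.measurableSet_limsup fun k => hBmeas k
    have hae : ∀ x, x ∉ Filter.limsup B atTop →
        Tendsto (fun k => fn (N k) x) atTop (𝓝 (f x)) := by
      intro x hx
      rw [Filter.mem_limsup_iff_frequently_mem, Filter.not_frequently] at hx
      have hx' : ∀ᶠ k in atTop, |fn (N k) x - f x| ≤ (1/2:ℝ)^k := by
        filter_upwards [hx] with k hk
        by_contra hcon
        push_neg at hcon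
        exact hk (subset_toMeasurable ν (E k) hcon)
      rw [tendsto_iff_dist_tendsto_zero]
      refine squeeze_zero' (g := fun k => (1/2:ℝ)^k) (Eventually.of_forall fun k => dist_nonneg) ?_ ?_
      · filter_upwards [hx'] with k hk
        rwa [Real.dist_eq]
      · exact tendsto_pow_atTop_nhds_zero_of_lt_one (by norm_num) (by norm_num)
    have haem : AEMeasurable f ν := by
      refine aemeasurable_of_tendsto_metrizable_ae atTop
        (fun k => ((hfn (N k)).measurable').aemeasurable) ?_
      rw [ae_iff]
      exact measure_mono_null (fun x hx => by
        by_contra hcon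
        exact hx (hae x hcon)) hZ
    obtain ⟨g, hg, hfg⟩ := haem
    have hfgnull : ν {x | f x ≠ g x} = 0 := ae_iff.mp hfg
    set M := toMeasurable ν {x | f x ≠ g x} with hM
    have hMmeas : MeasurableSet M := measurableSet_toMeasurable ν _
    have hMnull : ν M = 0 := by rw [hM, measure_toMeasurable]; exact hfgnull
    intro s hs
    have hsplit : f ⁻¹' s = (f ⁻¹' s ∩ M) ∪ (g ⁻¹' s \ M) := by
      ext x
      by_cases hx : x ∈ M
      · simp [hx]
      · have : f x = g x := by
          by_contra hcon
          exact hx (subset_toMeasurable ν _ hcon)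
        simp [hx, Set.mem_preimage, this]
    rw [hsplit]
    exact ((hcomplete _ M hMmeas hMnull Set.inter_subset_right)).union ((hg hs).diff hMmeas)
  · -- measurable → T1-measurable
    intro hf
    have h0 : (0:ℝ) ∈ (Set.univ : Set ℝ) := Set.mem_univ 0
    set fn := fun n => SimpleFunc.approxOn f hf Set.univ 0 h0 n with hfn
    have htend : ∀ x, Tendsto (fun n => fn n x) atTop (𝓝 (f x)) := fun x =>
      SimpleFunc.tendsto_approxOn hf h0 (by simp)
    have hmeas : TendstoInMeasure ν (fun n x => fn n x) atTop f :=
      tendstoInMeasure_of_tendsto_ae (fun n => (fn n).aestronglyMeasurable)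
        (ae_of_all _ htend)
    refine ⟨fun n x => fn n x, fun n => isSimpleFn_of_finite _ (fn n).finite_range
      (fn n).measurableSet_fiber, ?_⟩
    intro ε hε
    have h1 := tendstoInMeasure_iff_dist.mp hmeas ε hε
    have h2 : Tendsto (fun n => ν {x | ε < |fn n x - f x|}) atTop (𝓝 0) := by
      refine tendsto_of_tendsto_of_tendsto_of_le_of_le tendsto_const_nhds h1
        (fun n => zero_le) (fun n => measure_mono ?_)
      intro x hx
      rw [Set.mem_setOf_eq, Real.dist_eq]
      exact le_of_lt hx
    have h3 : Tendsto (fun n => (ν {x | ε < |fn n x - f x|}).toReal) atTop (𝓝 0) := by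
      have := (ENNReal.tendsto_toReal (by simp : (0:ENNReal) ≠ ⊤)).comp h2
      simpa [Function.comp_def] using this
    have : (fun n => outerCharge {A : Set X | MeasurableSet A} (fun A => (ν A).toReal)
        {x | ε < |fn n x - f x|}) = fun n => (ν {x | ε < |fn n x - f x|}).toReal := by
      funext n; exact outerCharge_eq_measure ν _
    rwa [this]
end

section
/- Suppose (X,𝒜,μ) is a complete measure space with μ(X) < ∞ (regarded as a bounded charge space). Then a function f : X → ℝ is integrable in the charge-theoretic sense (it admits a determining sequence of simple functions) if and only if it is Lebesgue integrable with respect to μ; moreover, the charge-theoretic integral ∫ f dμ equals the Lebesgue integral of f. -/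
open Filter Set Topology

section Aux

open MeasureTheory

variable {X : Type*} [MeasurableSpace X] (ν : Measure X) [IsFiniteMeasure ν]

lemma outerCharge_eq (A : Set X) :
    outerCharge {A : Set X | MeasurableSet A} (fun A => (ν A).toReal) A = (ν A).toReal := by
  have hmem : (ν A).toReal ∈ (fun A => (ν A).toReal) '' {B | MeasurableSet B ∧ A ⊆ B} := by
    refine ⟨toMeasurable ν A, ⟨measurableSet_toMeasurable ν A, subset_toMeasurable ν A⟩, ?_⟩
    show (ν (toMeasurable ν A)).toReal = _
    rw [measure_toMeasurable]
  have hlb : ∀ r ∈ (fun A => (ν A).toReal) '' {B | MeasurableSet B ∧ A ⊆ B},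
      (ν A).toReal ≤ r := by
    rintro r ⟨B, ⟨hB, hAB⟩, rfl⟩
    exact ENNReal.toReal_mono (measure_ne_top ν B) (measure_mono hAB)
  exact le_antisymm (csInf_le ⟨_, hlb⟩ hmem) (le_csInf ⟨_, hmem⟩ hlb)

variable {ν}

lemma exists_simpleFunc {f : X → ℝ} (h : IsSimpleFn {A : Set X | MeasurableSet A} f) :
    ∃ g : SimpleFunc X ℝ, ⇑g = f := by
  obtain ⟨n, c, A, hA, hdisj, hcover, hf⟩ := h
  have hF : f = fun x => ∑ k, (A k).indicator (fun _ => c k) x := funext hf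
  have hm : Measurable f := by
    rw [hF]
    exact Finset.measurable_sum _ fun k _ => (measurable_const.indicator (hA k))
  have hval : ∀ x, ∃ k, f x = c k := by
    intro x
    obtain ⟨k, hk⟩ := Set.mem_iUnion.mp (hcover ▸ Set.mem_univ x)
    refine ⟨k, ?_⟩
    rw [hf x]
    rw [Finset.sum_eq_single k]
    · simp [Set.indicator_of_mem hk]
    · intro j _ hj
      have hxj : x ∉ A j := fun hxA => (Set.disjoint_left.mp (hdisj hj) hxA) hk
      simp [Set.indicator_of_notMem hxj]
    · simp
  have hrange : Set.range f ⊆ Set.range c := by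
    rintro y ⟨x, rfl⟩
    obtain ⟨k, hk⟩ := hval x
    exact ⟨k, hk.symm⟩
  exact ⟨⟨f, fun y => hm (measurableSet_singleton y),
    (Set.finite_range c).subset hrange⟩, rfl⟩

lemma isSimpleFn_simpleFunc (g : SimpleFunc X ℝ) :
    IsSimpleFn {A : Set X | MeasurableSet A} ⇑g := by
  classical
  set s := g.range with hs
  set e := s.equivFin with he
  refine ⟨s.card, fun k => (e.symm k : ℝ), fun k => ⇑g ⁻¹' {(e.symm k : ℝ)}, ?_, ?_, ?_, ?_⟩
  · intro k; exact g.measurableSet_fiber _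
  · intro i j hij
    rw [Set.disjoint_left]
    intro x hxi hxj
    have : (e.symm i : ℝ) = (e.symm j : ℝ) := by
      rw [← Set.mem_singleton_iff.mp hxi, ← Set.mem_singleton_iff.mp hxj]
    exact hij (e.symm.injective (Subtype.ext this))
  · refine Set.eq_univ_of_forall fun x => ?_
    refine Set.mem_iUnion.mpr ⟨e ⟨g x, g.mem_range_self x⟩, ?_⟩
    simp
  · intro x
    rw [Finset.sum_eq_single (e ⟨g x, g.mem_range_self x⟩)]
    · rw [Set.indicator_of_mem (by simp)]
      simp
    · intro j _ hj
      refine Set.indicator_of_notMem (fun hx => hj ?_) _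
      have hgx : g x = (e.symm j : ℝ) := hx
      have : (⟨g x, g.mem_range_self x⟩ : {y // y ∈ s}) = e.symm j := Subtype.ext hgx
      rw [← Equiv.apply_symm_apply e j, ← this]
    · simp

lemma sIntegral_simpleFunc (g : SimpleFunc X ℝ) :
    sIntegral (fun A => (ν A).toReal) ⇑g = ∫ x, g x ∂ν := by
  have h1 : sIntegral (fun A => (ν A).toReal) ⇑g
      = ∑ y ∈ g.range, y * (ν (⇑g ⁻¹' {y})).toReal := by
    refine finsum_eq_finset_sum_of_support_subset _ ?_
    intro y hy
    simp only [Function.mem_support, ne_eq] at hy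
    by_contra hmem
    have hne : ⇑g ⁻¹' {y} = ∅ := by
      refine Set.preimage_singleton_eq_empty.mpr fun hr => hmem ?_
      exact SimpleFunc.mem_range.mpr hr
    rw [hne] at hy
    simp at hy
  rw [h1, ← SimpleFunc.integral_eq_integral g (SimpleFunc.integrable_of_isFiniteMeasure g),
    SimpleFunc.integral_eq]
  exact Finset.sum_congr rfl fun y _ => by rw [smul_eq_mul, mul_comm]; rfl

lemma int_abs {u : X → ℝ} (hu : Integrable u ν) :
    ∫ x, |u x| ∂ν = (∫⁻ x, ‖u x‖₊ ∂ν).toReal := by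
  have := integral_norm_eq_lintegral_enorm hu.aestronglyMeasurable
  simp only [Real.norm_eq_abs] at this
  exact this

end Aux

section Key

open MeasureTheory

variable {X : Type*} [MeasurableSpace X] (ν : Measure X) [IsFiniteMeasure ν]

lemma hazy_tendsto_ennreal {fn : ℕ → X → ℝ} {f : X → ℝ}
    (h : HazyConv {A : Set X | MeasurableSet A} (fun A => (ν A).toReal) fn f) :
    ∀ ε > (0 : ℝ), Tendsto (fun n => ν {x | ε < |fn n x - f x|}) atTop (𝓝 0) := by
  intro ε hε
  have h2 := h ε hε
  simp only [outerCharge_eq ν] at h2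
  exact (ENNReal.tendsto_toReal_iff (fun n => measure_ne_top ν _)
    (by simp : (0 : ENNReal) ≠ ⊤)).mp (by simpa using h2)

lemma hazyConv_of_ennreal {fn : ℕ → X → ℝ} {f : X → ℝ}
    (h : ∀ ε > (0 : ℝ), Tendsto (fun n => ν {x | ε < |fn n x - f x|}) atTop (𝓝 0)) :
    HazyConv {A : Set X | MeasurableSet A} (fun A => (ν A).toReal) fn f := by
  intro ε hε
  simp only [outerCharge_eq ν]
  simpa using (ENNReal.tendsto_toReal_iff (fun n => measure_ne_top ν _)
    (by simp : (0 : ENNReal) ≠ ⊤)).mpr (h ε hε)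

variable {ν}

theorem key_determining {fn : ℕ → X → ℝ} {f : X → ℝ}
    (h : IsDetermining {A : Set X | MeasurableSet A} (fun A => (ν A).toReal) fn f) :
    Integrable f ν ∧ Tendsto (fun n => sIntegral (fun A => (ν A).toReal) (fn n)) atTop
      (𝓝 (∫ x, f x ∂ν)) := by
  obtain ⟨hsimp, hhazy, hcauchy⟩ := h
  choose g hg using fun n => exists_simpleFunc (hsimp n)
  have hi : ∀ n, Integrable (fn n) ν := fun n =>
    (hg n) ▸ SimpleFunc.integrable_of_isFiniteMeasure (g n)
  have hsint : ∀ m n, sIntegral (fun A => (ν A).toReal) (fun x => |fn m x - fn n x|)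
      = ∫ x, |fn m x - fn n x| ∂ν := by
    intro m n
    have hD : ⇑((g m - g n).map (fun r : ℝ => |r|)) = fun x => |fn m x - fn n x| := by
      funext x
      simp [hg]
    rw [← hD, sIntegral_simpleFunc]
  have hC : Tendsto (fun mn : ℕ × ℕ => ∫ x, |fn mn.1 x - fn mn.2 x| ∂ν) atTop (𝓝 0) := by
    have he : (fun mn : ℕ × ℕ => sIntegral (fun A => (ν A).toReal)
        (fun x => |fn mn.1 x - fn mn.2 x|))
        = fun mn : ℕ × ℕ => ∫ x, |fn mn.1 x - fn mn.2 x| ∂ν := funext fun mn => hsint mn.1 mn.2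
    rwa [he] at hcauchy
  set T : ℕ → (X →₁[ν] ℝ) := fun n => (hi n).toL1 (fn n) with hT
  have hdist : ∀ m n, dist (T m) (T n) = ∫ x, |fn m x - fn n x| ∂ν := by
    intro m n
    rw [dist_edist, hT]
    rw [Integrable.edist_toL1_toL1 (fn m) (fn n) (hi m) (hi n)]
    rw [int_abs (u := fun x => fn m x - fn n x) ((hi m).sub (hi n))]
    simp only [edist_eq_enorm_sub, enorm_eq_nnnorm]
  have hcs : CauchySeq T := by
    rw [Metric.cauchySeq_iff]
    intro ε hε
    obtain ⟨N, hN⟩ := (Metric.tendsto_atTop.mp hC) ε hε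
    refine ⟨max N.1 N.2, fun m hm n hn => ?_⟩
    have h5 := hN (m, n) (Prod.le_def.mpr
      ⟨le_trans (le_max_left _ _) hm, le_trans (le_max_right _ _) hn⟩)
    rw [hdist m n]
    simpa [Real.dist_eq, abs_of_nonneg (integral_nonneg (fun x => abs_nonneg _))] using h5
  obtain ⟨G, hG⟩ := cauchySeq_tendsto_of_complete hcs
  have hGi : Integrable (⇑G) ν := L1.integrable_coeFn G
  have hL1 : Tendsto (fun n => ∫⁻ x, ‖fn n x - G x‖₊ ∂ν) atTop (𝓝 0) := by
    have hfin : ∀ n, (∫⁻ x, ‖fn n x - G x‖₊ ∂ν) ≠ ⊤ := fun n => (((hi n).sub hGi).2).ne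
    refine (ENNReal.tendsto_toReal_iff hfin (by simp : (0 : ENNReal) ≠ ⊤)).mp ?_
    have heq : ∀ n, (∫⁻ x, ‖fn n x - G x‖₊ ∂ν).toReal = dist (T n) G := by
      intro n
      have e1 : edist (T n) G = ∫⁻ x, edist (fn n x) (G x) ∂ν := by
        conv_lhs => rw [← Integrable.toL1_coeFn G hGi]
        exact Integrable.edist_toL1_toL1 _ _ _ _
      rw [dist_edist, e1]
      simp only [edist_eq_enorm_sub, enorm_eq_nnnorm]
    rw [funext heq]
    simpa using tendsto_iff_dist_tendsto_zero.mp hG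
  have tim : TendstoInMeasure ν fn atTop ⇑G := by
    refine tendstoInMeasure_of_tendsto_eLpNorm one_ne_zero
      (fun n => (hi n).aestronglyMeasurable) hGi.aestronglyMeasurable ?_
    simp only [eLpNorm_one_eq_lintegral_enorm, Pi.sub_apply]
    exact hL1
  have hhazy' := hazy_tendsto_ennreal ν hhazy
  have feq : f =ᵐ[ν] ⇑G := by
    have hS : ∀ ε : ℝ, 0 < ε → ν {x | ε < |f x - G x|} = 0 := by
      intro ε hε
      have hsub : ∀ n, {x | ε < |f x - G x|} ⊆
          {x | ε / 2 < |fn n x - f x|} ∪ {x | ε / 2 ≤ dist (fn n x) (G x)} := by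
        intro n x hx
        by_contra hcon
        simp only [Set.mem_union, Set.mem_setOf_eq, not_or, not_lt, not_le,
          Real.dist_eq] at hcon
        obtain ⟨h1, h2⟩ := hcon
        have hx' : ε < |f x - G x| := hx
        have htri : |f x - G x| ≤ |fn n x - f x| + |fn n x - G x| := by
          have h6 := abs_sub_le (f x) (fn n x) (G x)
          rwa [abs_sub_comm (f x) (fn n x)] at h6
        linarith
      have hlim : Tendsto (fun n => ν {x | ε / 2 < |fn n x - f x|}
          + ν {x | ε / 2 ≤ dist (fn n x) (G x)}) atTop (𝓝 0) := by
        simpa using (hhazy' (ε / 2) (by linarith)).add (tendstoInMeasure_iff_dist.mp tim (ε / 2) (by linarith))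
      have hb : ∀ n, ν {x | ε < |f x - G x|} ≤ ν {x | ε / 2 < |fn n x - f x|}
          + ν {x | ε / 2 ≤ dist (fn n x) (G x)} := fun n =>
        le_trans (measure_mono (hsub n)) (measure_union_le _ _)
      exact le_antisymm (ge_of_tendsto' hlim hb) zero_le
    refine ae_iff.mpr ?_
    have hsub2 : {x | ¬ f x = G x} ⊆ ⋃ k : ℕ, {x | 1 / ((k : ℝ) + 1) < |f x - G x|} := by
      intro x hx
      have hpos : 0 < |f x - G x| := abs_pos.mpr (sub_ne_zero.mpr hx)
      obtain ⟨k, hk⟩ := exists_nat_one_div_lt hpos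
      exact Set.mem_iUnion.mpr ⟨k, hk⟩
    exact measure_mono_null hsub2 (measure_iUnion_null fun k => hS _ (by positivity))
  have hfint : Integrable f ν := hGi.congr feq.symm
  refine ⟨hfint, ?_⟩
  have h2 : Tendsto (fun n => ∫ x, fn n x ∂ν) atTop (𝓝 (∫ x, G x ∂ν)) :=
    tendsto_integral_of_L1 ⇑G hGi.aestronglyMeasurable (Filter.Eventually.of_forall hi) hL1
  have h3 : ∫ x, G x ∂ν = ∫ x, f x ∂ν := integral_congr_ae feq.symm
  have h4 : ∀ n, sIntegral (fun A => (ν A).toReal) (fn n) = ∫ x, fn n x ∂ν := by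
    intro n; rw [← hg n, sIntegral_simpleFunc]
  simp only [h4]
  rwa [h3] at h2

end Key

section Back

open MeasureTheory

variable {X : Type*} [MeasurableSpace X] {ν : Measure X} [IsFiniteMeasure ν]

lemma memL1_of_integrable {f : X → ℝ} (hf : Integrable f ν) :
    MemL1 {A : Set X | MeasurableSet A} (fun A => (ν A).toReal) f := by
  have hmeas := hf.aestronglyMeasurable
  set f' := hmeas.mk f with hf'def
  have fmeas : Measurable f' := hmeas.stronglyMeasurable_mk.measurable
  have hae : f =ᵐ[ν] f' := hmeas.ae_eq_mk
  have hf' : Integrable f' ν := hf.congr hae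
  set gn : ℕ → SimpleFunc X ℝ := fun n =>
    SimpleFunc.approxOn f' fmeas (Set.range f' ∪ {0}) 0 (by simp) n with hgndef
  have hint : ∀ n, Integrable (gn n) ν := fun n =>
    SimpleFunc.integrable_approxOn_range fmeas hf' n
  have hLconv : Tendsto (fun n => ∫⁻ x, ‖gn n x - f' x‖₊ ∂ν) atTop (𝓝 0) :=
    SimpleFunc.tendsto_approxOn_range_L1_enorm fmeas hf'
  have hnull : ν {x | ¬ f x = f' x} = 0 := ae_iff.mp hae
  have hsint : ∀ m n : ℕ, sIntegral (fun A => (ν A).toReal) (fun x => |gn m x - gn n x|)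
      = ∫ x, |gn m x - gn n x| ∂ν := by
    intro m n
    have hD : ⇑((gn m - gn n).map (fun r : ℝ => |r|)) = fun x => |gn m x - gn n x| := by
      funext x; simp
    rw [← hD, sIntegral_simpleFunc]
  refine ⟨fun n => ⇑(gn n), fun n => isSimpleFn_simpleFunc (gn n), ?_, ?_⟩
  · refine hazyConv_of_ennreal ν ?_
    intro ε hε
    have tim : TendstoInMeasure ν (fun n => ⇑(gn n)) atTop f' :=
      tendstoInMeasure_of_tendsto_ae (fun n => (gn n).aestronglyMeasurable)
        (Filter.Eventually.of_forall fun x => SimpleFunc.tendsto_approxOn fmeas (by simp)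
          (subset_closure (Set.mem_union_left _ (Set.mem_range_self x))))
    have hb : ∀ n, ν {x | ε < |gn n x - f x|} ≤ ν {x | ε ≤ dist (gn n x) (f' x)} := by
      intro n
      have hsub : {x | ε < |gn n x - f x|} ⊆
          {x | ε ≤ dist (gn n x) (f' x)} ∪ {x | ¬ f x = f' x} := by
        intro x hx
        by_cases hxe : f x = f' x
        · left
          have hx2 : ε < |gn n x - f' x| := hxe ▸ hx
          exact le_of_lt (by simpa [Real.dist_eq] using hx2)
        · right; exact hxe
      calc ν {x | ε < |gn n x - f x|}
          ≤ ν ({x | ε ≤ dist (gn n x) (f' x)} ∪ {x | ¬ f x = f' x}) := measure_mono hsub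
        _ ≤ ν {x | ε ≤ dist (gn n x) (f' x)} + ν {x | ¬ f x = f' x} := measure_union_le _ _
        _ = ν {x | ε ≤ dist (gn n x) (f' x)} := by rw [hnull, add_zero]
    exact tendsto_of_tendsto_of_tendsto_of_le_of_le tendsto_const_nhds (tendstoInMeasure_iff_dist.mp tim ε hε)
      (fun n => zero_le) hb
  · set a : ℕ → ℝ := fun n => ∫ x, |gn n x - f' x| ∂ν with hadef
    have haten : Tendsto a atTop (𝓝 0) := by
      have hafin : ∀ n, a n = (∫⁻ x, ‖gn n x - f' x‖₊ ∂ν).toReal := fun n =>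
        int_abs (u := fun x => gn n x - f' x) ((hint n).sub hf')
      rw [funext hafin]
      simpa [enorm_eq_nnnorm] using (ENNReal.tendsto_toReal_iff (fun n => (((hint n).sub hf').2).ne)
        (by simp : (0 : ENNReal) ≠ ⊤)).mpr hLconv
    have hbound : ∀ mn : ℕ × ℕ, sIntegral (fun A => (ν A).toReal)
        (fun x => |gn mn.1 x - gn mn.2 x|) ≤ a mn.1 + a mn.2 := by
      intro mn
      rw [hsint mn.1 mn.2]
      calc ∫ x, |gn mn.1 x - gn mn.2 x| ∂ν
          ≤ ∫ x, (|gn mn.1 x - f' x| + |gn mn.2 x - f' x|) ∂ν := by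
            refine integral_mono ((hint mn.1).sub (hint mn.2)).abs
              ((((hint mn.1).sub hf').abs).add (((hint mn.2).sub hf').abs)) ?_
            intro x
            have htri := abs_sub_le (gn mn.1 x) (f' x) (gn mn.2 x)
            rw [abs_sub_comm (f' x) (gn mn.2 x)] at htri
            exact htri
        _ = a mn.1 + a mn.2 :=
            integral_add (((hint mn.1).sub hf').abs) (((hint mn.2).sub hf').abs)
    have hnn : ∀ mn : ℕ × ℕ, (0 : ℝ) ≤ sIntegral (fun A => (ν A).toReal)
        (fun x => |gn mn.1 x - gn mn.2 x|) := by
      intro mn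
      rw [hsint mn.1 mn.2]
      exact integral_nonneg fun x => abs_nonneg _
    have hfst : Tendsto (fun mn : ℕ × ℕ => a mn.1) atTop (𝓝 0) := by
      refine haten.comp ?_
      rw [← Filter.prod_atTop_atTop_eq]
      exact tendsto_fst
    have hsnd : Tendsto (fun mn : ℕ × ℕ => a mn.2) atTop (𝓝 0) := by
      refine haten.comp ?_
      rw [← Filter.prod_atTop_atTop_eq]
      exact tendsto_snd
    refine tendsto_of_tendsto_of_tendsto_of_le_of_le tendsto_const_nhds ?_ hnn hbound
    simpa using hfst.add hsnd

end Back

open MeasureTheory in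
/-- On a complete finite measure space, regarded as a bounded charge
space, `f : X → ℝ` is integrable in the charge-theoretic sense iff it is Lebesgue
integrable, and then the two integrals agree. -/
theorem charge_integrable_iff_integrable {X : Type*} [MeasurableSpace X]
    (ν : Measure X) [IsFiniteMeasure ν]
    (hcomplete : ∀ A N : Set X, MeasurableSet N → ν N = 0 → A ⊆ N → MeasurableSet A)
    (f : X → ℝ) :
    (MemL1 {A : Set X | MeasurableSet A} (fun A => (ν A).toReal) f ↔ Integrable f ν) ∧
    (MemL1 {A : Set X | MeasurableSet A} (fun A => (ν A).toReal) f →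
      chargeIntegral {A : Set X | MeasurableSet A} (fun A => (ν A).toReal) f
        = ∫ x, f x ∂ν) := by
  constructor
  · constructor
    · rintro ⟨fn, hfn⟩
      exact (key_determining hfn).1
    · exact memL1_of_integrable
  · intro h
    have hex : ∃ fn, IsDetermining {A : Set X | MeasurableSet A}
        (fun A => (ν A).toReal) fn f := h
    unfold chargeIntegral
    rw [dif_pos hex]
    exact (key_determining hex.choose_spec).2.limUnder_eq
end
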